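/- arXiv:1003.2292 — 3 statements merged into one kernel-verified Lean document; each statement's English description precedes it below -/
import Mathlib

section
/- In fermionic Fock space 𝓕_P over a complex Hilbert space H with projection P, the creation and annihilation operators a(f), a(g)* satisfying the CAR a(f)a(g)* + a(g)*a(f) = (f,g)·I and a(f)a(g) + a(g)a(f) = 0 have a cyclic vacuum vector Ω with inner products (a(g_m)*⋯a(g₁)*a(f₁)⋯a(f_n)Ω, Ω) = δ_{n,m}·det((Pf_i, g_j)); these relations determine 𝓕_P up to unitary equivalence: any two irreducible representations of the CAR with cyclic vectors satisfying these vacuum correlation formulas are unitarily equivalent. -/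
open scoped InnerProductSpace
open ContinuousLinearMap

noncomputable section

variable {H : Type*} [NormedAddCommGroup H] [InnerProductSpace ℂ H] [CompleteSpace H]

/-- `IsFockRep P F a Ω` : `a` is an (irreducible) representation of the canonical
anticommutation relations over `H` on `F`, with cyclic vacuum vector `Ω` whose
correlation functions are the determinants `det((P fᵢ, gⱼ))` determined by the
projection `P` — i.e. `F` "is" the fermionic Fock space `𝓕_P`.
(Here `(x, y)` denotes the inner product linear in `x`, i.e. `⟪y, x⟫_ℂ`.) -/
def IsFockRep (P : H →L[ℂ] H)
    (F : Type*) [NormedAddCommGroup F] [InnerProductSpace ℂ F] [CompleteSpace F]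
    (a : H → (F →L[ℂ] F)) (Ω : F) : Prop :=
  (∀ f g, a (f + g) = a f + a g) ∧
  (∀ (c : ℂ) f, a (c • f) = (starRingEnd ℂ) c • a f) ∧
  (∀ f g, a f * adjoint (a g) + adjoint (a g) * a f = ⟪g, f⟫_ℂ • (1 : F →L[ℂ] F)) ∧
  (∀ f g, a f * a g + a g * a f = 0) ∧
  (Submodule.topologicalClosure (Submodule.span ℂ
      {v : F | ∃ l : List (F →L[ℂ] F),
        (∀ T ∈ l, ∃ f, T = a f ∨ T = adjoint (a f)) ∧ v = l.prod Ω}) = ⊤) ∧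
  (∀ (n : ℕ) (f g : Fin n → H),
    ⟪Ω, (((List.ofFn fun i => adjoint (a (g i))).reverse.prod *
        (List.ofFn fun i => a (f i)).prod) Ω)⟫_ℂ =
      Matrix.det (Matrix.of fun i j : Fin n => ⟪g j, P (f i)⟫_ℂ)) ∧
  (∀ (n m : ℕ), n ≠ m → ∀ (f : Fin n → H) (g : Fin m → H),
    ⟪Ω, (((List.ofFn fun i => adjoint (a (g i))).reverse.prod *
        (List.ofFn fun i => a (f i)).prod) Ω)⟫_ℂ = 0) ∧
  (∀ K : Submodule ℂ F, IsClosed (K : Set F) →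
    (∀ f, ∀ x ∈ K, a f x ∈ K ∧ adjoint (a f) x ∈ K) → K = ⊥ ∨ K = ⊤)

/-!
The CAR give `a(f) a(g)* = (g, f) - a(g)* a(f)`, so the vacuum expectation of any word in the
`a(f)`, `a(g)*` reduces, by moving annihilators to the right, to vacuum expectations of
normal-ordered words `a(g_m)*⋯a(g₁)* a(f₁)⋯a(f_n)`, which are prescribed. Hence the vectors
`w Ω₁` and `w Ω₂`, `w` ranging over words, have the same Gram matrix; both families are total by
cyclicity, so `w Ω₁ ↦ w Ω₂` extends to a unitary, and it intertwines `a₁(f)` with `a₂(f)` because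
`a(f)` maps the vector of `w` to the vector of the word `a(f) w`.
-/

namespace CAR

section NormalOrder

variable {α : Type*}

def inversions : List (Bool × α) → ℕ
  | [] => 0
  | x :: t => (if x.1 then 0 else t.countP (·.1)) + inversions t

theorem inversions_append (p q : List (Bool × α)) :
    inversions (p ++ q) =
      inversions p + inversions q + p.countP (!·.1) * q.countP (·.1) := by
  induction p with
  | nil => simp [inversions]
  | cons x t ih =>
    rcases x with ⟨_ | _, _⟩
    · simp only [List.cons_append, inversions, Bool.false_eq_true, ↓reduceIte,
        List.countP_append, ih, Bool.not_false, List.countP_cons_of_pos]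
      ring
    · simp [inversions, ih]

theorem inversions_swap (p s : List (Bool × α)) (f g : α) :
    inversions (p ++ (true, g) :: (false, f) :: s) + 1 =
      inversions (p ++ (false, f) :: (true, g) :: s) := by
  simp only [inversions_append, inversions, ↓reduceIte, Bool.false_eq_true, zero_add,
    List.countP_cons_of_pos, not_false_eq_true, List.countP_cons_of_neg]
  ring

theorem inversions_drop_le (p s : List (Bool × α)) (f g : α) :
    inversions (p ++ s) ≤ inversions (p ++ (false, f) :: (true, g) :: s) := by
  simp only [inversions_append, inversions, Bool.false_eq_true, ↓reduceIte,
    List.countP_cons_of_pos, zero_add, not_false_eq_true, List.countP_cons_of_neg, mul_add_one]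
  omega

def normalWord (gs fs : List α) : List (Bool × α) :=
  gs.map ((true, ·)) ++ fs.map ((false, ·))

theorem exists_normalWord_or_swap (l : List (Bool × α)) :
    (∃ gs fs, l = normalWord gs fs) ∨
      ∃ p s f g, l = p ++ (false, f) :: (true, g) :: s := by
  induction l with
  | nil => exact Or.inl ⟨[], [], rfl⟩
  | cons x t ih =>
    rcases ih with ⟨gs, fs, rfl⟩ | ⟨p, s, f, g, rfl⟩
    · rcases x with ⟨_ | _, u⟩
      · cases gs with
        | nil => exact Or.inl ⟨[], u :: fs, rfl⟩
        | cons g gs => exact Or.inr ⟨[], normalWord gs fs, u, g, rfl⟩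
      · exact Or.inl ⟨u :: gs, fs, rfl⟩
    · exact Or.inr ⟨x :: p, s, f, g, rfl⟩

/-- Moving annihilators to the right lowers `length + inversions`, so a function on words obeying
the anticommutation rule is determined by its values on normal-ordered words. -/
theorem eq_of_swap_rule {R : Type*} [Ring R] (c : α → α → R) {φ ψ : List (Bool × α) → R}
    (hφ : ∀ p s f g, φ (p ++ (false, f) :: (true, g) :: s) =
      c f g * φ (p ++ s) - φ (p ++ (true, g) :: (false, f) :: s))
    (hψ : ∀ p s f g, ψ (p ++ (false, f) :: (true, g) :: s) =
      c f g * ψ (p ++ s) - ψ (p ++ (true, g) :: (false, f) :: s))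
    (hnormal : ∀ gs fs, φ (normalWord gs fs) = ψ (normalWord gs fs)) : φ = ψ := by
  funext l
  induction hn : l.length + inversions l using Nat.strong_induction_on generalizing l with
  | _ n ih =>
    rcases exists_normalWord_or_swap l with ⟨gs, fs, rfl⟩ | ⟨p, s, f, g, rfl⟩
    · exact hnormal gs fs
    · have hswap := inversions_swap p s f g
      have hdrop := inversions_drop_le p s f g
      simp only [List.length_append, List.length_cons] at hn hswap hdrop
      rw [hφ, hψ, ih _ ?_ _ rfl, ih _ ?_ _ rfl] <;>
        simp only [List.length_append, List.length_cons] <;> omega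

end NormalOrder

section Words

variable {𝕜 F α : Type*} [RCLike 𝕜] [NormedAddCommGroup F] [InnerProductSpace 𝕜 F]
  [CompleteSpace F] (a : α → F →L[𝕜] F) (Ω : F)

/-- `(true, g)` stands for the creation operator `a(g)*`, `(false, f)` for `a(f)`. -/
def letterOp : Bool × α → F →L[𝕜] F
  | (true, g) => adjoint (a g)
  | (false, f) => a f

def wordVec (w : List (Bool × α)) : F :=
  (w.map (letterOp a)).prod Ω

def adjointWord (w : List (Bool × α)) : List (Bool × α) :=
  (w.map fun x => (!x.1, x.2)).reverse

@[simp]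
theorem wordVec_nil : wordVec a Ω [] = Ω := rfl

theorem wordVec_cons (x : Bool × α) (w : List (Bool × α)) :
    wordVec a Ω (x :: w) = letterOp a x (wordVec a Ω w) := rfl

theorem wordVec_append (p q : List (Bool × α)) :
    wordVec a Ω (p ++ q) = (p.map (letterOp a)).prod (wordVec a Ω q) := by
  simp [wordVec]

theorem adjoint_letterOp (x : Bool × α) : adjoint (letterOp a x) = letterOp a (!x.1, x.2) := by
  rcases x with ⟨_ | _, _⟩
  · rfl
  · exact adjoint_adjoint _

theorem inner_wordVec_left (w : List (Bool × α)) (v : F) :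
    ⟪wordVec a Ω w, v⟫_𝕜 = ⟪Ω, ((adjointWord w).map (letterOp a)).prod v⟫_𝕜 := by
  induction w generalizing v with
  | nil => simp [adjointWord]
  | cons x w ih =>
    rw [wordVec_cons, ← adjoint_inner_right, adjoint_letterOp, ih]
    simp [adjointWord]

theorem inner_wordVec_wordVec (w w' : List (Bool × α)) :
    ⟪wordVec a Ω w, wordVec a Ω w'⟫_𝕜 = ⟪Ω, wordVec a Ω (adjointWord w ++ w')⟫_𝕜 := by
  rw [inner_wordVec_left, wordVec_append]

theorem wordVec_swap {c : α → α → 𝕜}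
    (hcar : ∀ f g, a f * adjoint (a g) + adjoint (a g) * a f = c f g • 1)
    (p s : List (Bool × α)) (f g : α) :
    wordVec a Ω (p ++ (false, f) :: (true, g) :: s) =
      c f g • wordVec a Ω (p ++ s) - wordVec a Ω (p ++ (true, g) :: (false, f) :: s) := by
  have hswap := congr($(eq_sub_of_add_eq (hcar f g)) (wordVec a Ω s))
  simp only [wordVec_append, wordVec_cons, letterOp, mul_apply_eq_comp, sub_apply, smul_apply,
    one_apply_eq_self] at hswap ⊢
  rw [hswap, map_sub, map_smul]

theorem wordVec_normalWord {m n : ℕ} (g : Fin m → α) (f : Fin n → α) :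
    wordVec a Ω (normalWord (List.ofFn g).reverse (List.ofFn f)) =
      ((List.ofFn fun i => adjoint (a (g i))).reverse.prod *
        (List.ofFn fun i => a (f i)).prod) Ω := by
  simp [normalWord, wordVec, List.map_reverse, List.map_ofFn, Function.comp_def, letterOp]

theorem range_letterOp :
    Set.range (letterOp a) = {T | ∃ f, T = a f ∨ T = adjoint (a f)} := by
  ext T
  constructor
  · rintro ⟨⟨_ | _, f⟩, rfl⟩
    exacts [⟨f, .inl rfl⟩, ⟨f, .inr rfl⟩]
  · rintro ⟨f, rfl | rfl⟩
    exacts [⟨(false, f), rfl⟩, ⟨(true, f), rfl⟩]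

theorem range_wordVec : Set.range (wordVec a Ω) = {v : F | ∃ l : List (F →L[𝕜] F),
      (∀ T ∈ l, ∃ f, T = a f ∨ T = adjoint (a f)) ∧ v = l.prod Ω} := by
  ext v
  have hlists := Set.ext_iff.mp (Set.range_list_map (letterOp a))
  simp only [range_letterOp, Set.mem_range, Set.mem_ofPred_eq] at hlists
  constructor
  · rintro ⟨w, rfl⟩
    exact ⟨_, (hlists _).mp ⟨w, rfl⟩, rfl⟩
  · rintro ⟨l, hl, rfl⟩
    obtain ⟨w, rfl⟩ := (hlists l).mpr hl
    exact ⟨w, rfl⟩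

end Words

section Unitary

variable {𝕜 ι E F : Type*} [RCLike 𝕜] [NormedAddCommGroup E] [InnerProductSpace 𝕜 E]
  [CompleteSpace E] [NormedAddCommGroup F] [InnerProductSpace 𝕜 F] [CompleteSpace F]

theorem exists_linearIsometryEquiv_apply_eq_of_inner_eq {v₁ : ι → E} {v₂ : ι → F}
    (hinner : ∀ i j, ⟪v₁ i, v₁ j⟫_𝕜 = ⟪v₂ i, v₂ j⟫_𝕜)
    (hdense₁ : Dense (Submodule.span 𝕜 (Set.range v₁) : Set E))
    (hdense₂ : Dense (Submodule.span 𝕜 (Set.range v₂) : Set F)) :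
    ∃ U : E ≃ₗᵢ[𝕜] F, ∀ i, U (v₁ i) = v₂ i := by
  set T₁ := Finsupp.linearCombination 𝕜 v₁
  set T₂ := Finsupp.linearCombination 𝕜 v₂
  have hgram : ∀ x y, ⟪T₂ x, T₂ y⟫_𝕜 = ⟪T₁ x, T₁ y⟫_𝕜 := by
    intro x y
    simp only [T₁, T₂, Finsupp.linearCombination_apply, Finsupp.sum_inner, Finsupp.inner_sum,
      inner_smul_left, inner_smul_right, hinner]
  have hnorm : ∀ x, ‖T₂ x‖ = ‖T₁ x‖ := fun x => by
    rw [norm_eq_sqrt_re_inner (𝕜 := 𝕜), norm_eq_sqrt_re_inner (𝕜 := 𝕜), hgram]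
  have hrange₁ : DenseRange T₁ := by
    rwa [DenseRange, ← LinearMap.coe_range, Finsupp.range_linearCombination]
  have hrange₂ : DenseRange T₂ := by
    rwa [DenseRange, ← LinearMap.coe_range, Finsupp.range_linearCombination]
  refine ⟨(LinearEquiv.refl 𝕜 _).extendOfIsometry T₁ T₂ hrange₁ hrange₂ hnorm, fun i => ?_⟩
  simpa [T₁, T₂] using
    (LinearEquiv.refl 𝕜 _).extendOfIsometry_eq T₁ T₂ hrange₁ hrange₂ hnorm (Finsupp.single i 1)

end Unitary

end CAR

open CAR

namespace IsFockRep

variable {E : Type*} [NormedAddCommGroup E] [InnerProductSpace ℂ E] {P : E →L[ℂ] E}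
  {F₁ : Type*} [NormedAddCommGroup F₁] [InnerProductSpace ℂ F₁] [CompleteSpace F₁]
  {F₂ : Type*} [NormedAddCommGroup F₂] [InnerProductSpace ℂ F₂] [CompleteSpace F₂]
  {a₁ : E → (F₁ →L[ℂ] F₁)} {Ω₁ : F₁} {a₂ : E → (F₂ →L[ℂ] F₂)} {Ω₂ : F₂}

theorem dense_span_wordVec (h : IsFockRep P F₁ a₁ Ω₁) :
    Dense (Submodule.span ℂ (Set.range (wordVec a₁ Ω₁)) : Set F₁) := by
  rw [range_wordVec]
  exact Submodule.dense_iff_topologicalClosure_eq_top.mpr h.2.2.2.2.1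

theorem inner_vacuum_normalWord_eq (h₁ : IsFockRep P F₁ a₁ Ω₁) (h₂ : IsFockRep P F₂ a₂ Ω₂)
    (gs fs : List E) :
    ⟪Ω₁, wordVec a₁ Ω₁ (normalWord gs fs)⟫_ℂ = ⟪Ω₂, wordVec a₂ Ω₂ (normalWord gs fs)⟫_ℂ := by
  obtain ⟨-, -, -, -, -, hdet₁, hzero₁, -⟩ := h₁
  obtain ⟨-, -, -, -, -, hdet₂, hzero₂, -⟩ := h₂
  obtain ⟨m, g, rfl⟩ : ∃ m, ∃ g : Fin m → E, gs = (List.ofFn g).reverse :=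
    ⟨_, gs.reverse.get, by rw [List.ofFn_get, List.reverse_reverse]⟩
  obtain ⟨n, f, rfl⟩ : ∃ n, ∃ f : Fin n → E, fs = List.ofFn f :=
    ⟨_, fs.get, (List.ofFn_get fs).symm⟩
  rw [wordVec_normalWord, wordVec_normalWord]
  obtain rfl | hnm := eq_or_ne n m
  · rw [hdet₁, hdet₂]
  · rw [hzero₁ n m hnm, hzero₂ n m hnm]

theorem inner_vacuum_wordVec_eq (h₁ : IsFockRep P F₁ a₁ Ω₁) (h₂ : IsFockRep P F₂ a₂ Ω₂)
    (w : List (Bool × E)) : ⟪Ω₁, wordVec a₁ Ω₁ w⟫_ℂ = ⟪Ω₂, wordVec a₂ Ω₂ w⟫_ℂ := by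
  refine congrFun (eq_of_swap_rule (fun f g => ⟪g, f⟫_ℂ) (φ := fun w => ⟪Ω₁, wordVec a₁ Ω₁ w⟫_ℂ)
    (ψ := fun w => ⟪Ω₂, wordVec a₂ Ω₂ w⟫_ℂ) ?_ ?_ (inner_vacuum_normalWord_eq h₁ h₂)) w
  all_goals
    intro p s f g
    simp only [wordVec_swap _ _ h₁.2.2.1, wordVec_swap _ _ h₂.2.2.1, inner_sub_right,
      inner_smul_right]

theorem inner_wordVec_eq (h₁ : IsFockRep P F₁ a₁ Ω₁) (h₂ : IsFockRep P F₂ a₂ Ω₂)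
    (w w' : List (Bool × E)) :
    ⟪wordVec a₁ Ω₁ w, wordVec a₁ Ω₁ w'⟫_ℂ = ⟪wordVec a₂ Ω₂ w, wordVec a₂ Ω₂ w'⟫_ℂ := by
  rw [inner_wordVec_wordVec, inner_wordVec_wordVec, h₁.inner_vacuum_wordVec_eq h₂]

end IsFockRep

theorem fockRep_unique_general (P : H →L[ℂ] H)
    (F₁ : Type*) [NormedAddCommGroup F₁] [InnerProductSpace ℂ F₁] [CompleteSpace F₁]
    (F₂ : Type*) [NormedAddCommGroup F₂] [InnerProductSpace ℂ F₂] [CompleteSpace F₂]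
    (a₁ : H → (F₁ →L[ℂ] F₁)) (Ω₁ : F₁) (h₁ : IsFockRep P F₁ a₁ Ω₁)
    (a₂ : H → (F₂ →L[ℂ] F₂)) (Ω₂ : F₂) (h₂ : IsFockRep P F₂ a₂ Ω₂) :
    ∃ U : F₁ ≃ₗᵢ[ℂ] F₂, U Ω₁ = Ω₂ ∧ ∀ f x, U (a₁ f x) = a₂ f (U x) := by
  obtain ⟨U, hU⟩ := exists_linearIsometryEquiv_apply_eq_of_inner_eq (h₁.inner_wordVec_eq h₂)
    h₁.dense_span_wordVec h₂.dense_span_wordVec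
  refine ⟨U, hU [], fun f => ?_⟩
  have hintertwine : (U : F₁ →L[ℂ] F₂) ∘L a₁ f = a₂ f ∘L (U : F₁ →L[ℂ] F₂) := by
    refine ContinuousLinearMap.ext_on h₁.dense_span_wordVec ?_
    rintro _ ⟨w, rfl⟩
    simpa [wordVec_cons, letterOp, hU w] using hU ((false, f) :: w)
  exact fun x => congr($hintertwine x)

/-- Uniqueness of the Fock representation of the CAR: any two irreducible
representations of the canonical anticommutation relations with cyclic vacuum
vectors satisfying the vacuum correlation formulas
`(a(g_m)*⋯a(g₁)* a(f₁)⋯a(f_n) Ω, Ω) = δ_{n,m} det((P fᵢ, gⱼ))`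
are unitarily equivalent, by a unitary matching the vacua and intertwining the
CAR operators. -/
theorem fockRep_unique (P : H →L[ℂ] H)
    (hP : P ∘L P = P) (hPsa : IsSelfAdjoint P)
    (F₁ : Type*) [NormedAddCommGroup F₁] [InnerProductSpace ℂ F₁] [CompleteSpace F₁]
    (F₂ : Type*) [NormedAddCommGroup F₂] [InnerProductSpace ℂ F₂] [CompleteSpace F₂]
    (a₁ : H → (F₁ →L[ℂ] F₁)) (Ω₁ : F₁) (h₁ : IsFockRep P F₁ a₁ Ω₁)
    (a₂ : H → (F₂ →L[ℂ] F₂)) (Ω₂ : F₂) (h₂ : IsFockRep P F₂ a₂ Ω₂) :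
    ∃ U : F₁ ≃ₗᵢ[ℂ] F₂, U Ω₁ = Ω₂ ∧ ∀ f x, U (a₁ f x) = a₂ f (U x) :=
  fockRep_unique_general P F₁ F₂ a₁ Ω₁ h₁ a₂ Ω₂ h₂
end
end

section
/- Let A be a closed densely defined operator on a Hilbert space and B a bounded operator with 0 ≤ B ≤ I such that AB = BA on a core H^∞ for A with B H^∞ ⊆ 𝒟(A*A). Then B preserves 𝒟(A) with AB = BA on 𝒟(A), B preserves 𝒟(A*A) with A*AB = BA*A there, and B commutes with the phase (partial isometry part of the polar decomposition) of A. -/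
open scoped InnerProductSpace

noncomputable section

variable {H : Type*} [NormedAddCommGroup H] [InnerProductSpace ℂ H] [CompleteSpace H]

/-- `IsModulusOf A T` : `T` is the absolute value `|A| = (A*A)^{1/2}` of the closed
densely defined operator `A`: a positive self-adjoint operator with the same domain
satisfying `⟪Ax, Ay⟫ = ⟪Tx, Ty⟫`. -/
def IsModulusOf (A T : H →ₗ.[ℂ] H) : Prop :=
  T.domain = A.domain ∧ T.adjoint = T ∧
    (∀ x : T.domain, 0 ≤ (⟪(x : H), T x⟫_ℂ).re ∧ (⟪(x : H), T x⟫_ℂ).im = 0) ∧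
    ∀ (x y : A.domain) (hx : (x : H) ∈ T.domain) (hy : (y : H) ∈ T.domain),
      ⟪A x, A y⟫_ℂ = ⟪T ⟨x, hx⟩, T ⟨y, hy⟩⟫_ℂ

/-- `IsPhaseOf A V` : `V` is the phase (partial isometry part of the polar
decomposition `A = V|A|`) of `A`: `V(|A|x) = Ax` on the domain and `V = 0`
on the orthogonal complement of the range of `|A|`. -/
def IsPhaseOf (A : H →ₗ.[ℂ] H) (V : H →L[ℂ] H) : Prop :=
  ∃ T : H →ₗ.[ℂ] H, IsModulusOf A T ∧
    (∀ (x : A.domain) (hx : (x : H) ∈ T.domain), V (T ⟨x, hx⟩) = A x) ∧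
    (∀ y : H, (∀ x : T.domain, ⟪y, T x⟫_ℂ = 0) → V y = 0)

open scoped LinearPMap

/-!
`B` commutes with `A` because `B × B` maps the graph of `A` restricted to the core into the
closed graph of `A`; by duality it then commutes with `A†`, hence with `A†A` and with the
resolvent `R = (1 + A†A)⁻¹`. The bounded operator `Z = |A| R` is positive with `Z² = R - R²`, so
`B` commutes with `Z = √(R - R²)`. The phase maps `Z u` to `A R u` and vanishes on `ker Z`; as
`H = ker Z ⊕ closure (range Z)`, the identity `BV = VB` follows from `B` commuting with `Z` and
with `A R`.
-/

theorem Commute.of_mul_self_left {A : Type*} [CStarAlgebra A] [PartialOrder A] [StarOrderedRing A]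
    {a b : A} (ha : 0 ≤ a) (h : Commute (a * a) b) : Commute a b := by
  rw [← CFC.sqrt_mul_self a, CFC.sqrt_eq_real_sqrt (a * a)]
  exact h.cfcₙ_real _

theorem IsSelfAdjoint.eq_of_comp_eq_of_eqOn_ker {𝕜 E F : Type*} [RCLike 𝕜]
    [NormedAddCommGroup E] [InnerProductSpace 𝕜 E] [CompleteSpace E] [NormedAddCommGroup F]
    [NormedSpace 𝕜 F] {Z : E →L[𝕜] E} (hZ : IsSelfAdjoint Z) {f g : E →L[𝕜] F}
    (hrange : f ∘L Z = g ∘L Z) (hker : ∀ k, Z k = 0 → f k = g k) : f = g := by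
  set K := LinearMap.range (Z : E →ₗ[𝕜] E)
  have hK : Kᗮ ≤ f.eqLocus g := fun k hk => by
    rw [ContinuousLinearMap.orthogonal_range, hZ.adjoint_eq] at hk
    exact hker k hk
  have hKK : Kᗮᗮ ≤ f.eqLocus g := by
    rw [Submodule.orthogonal_orthogonal_eq_closure]
    refine Submodule.topologicalClosure_minimal _ ?_ (f.isClosed_eqLocus g)
    rintro _ ⟨u, rfl⟩
    exact DFunLike.congr_fun hrange u
  ext x
  have hx : x ∈ Kᗮ ⊔ Kᗮᗮ := by
    rw [Submodule.sup_orthogonal_of_hasOrthogonalProjection]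
    trivial
  exact sup_le hK hKK hx

namespace LinearPMap

section CommutesWith

variable {R E : Type*} [Ring R] [AddCommGroup E] [Module R E]

def CommutesWith (T : E →ₗ.[R] E) (B : E → E) : Prop :=
  ∀ x : T.domain, ∃ hBx : B x ∈ T.domain, T ⟨B x, hBx⟩ = B (T x)

theorem mapsTo_graph_iff {S T : E →ₗ.[R] E} {B : E → E} :
    Set.MapsTo (Prod.map B B) S.graph T.graph ↔
      ∀ x : S.domain, ∃ hBx : B x ∈ T.domain, T ⟨B x, hBx⟩ = B (S x) := by
  constructor
  · intro h x
    obtain ⟨⟨y, hy⟩, rfl, hTy⟩ := T.mem_graph_iff.1 (h (S.mem_graph x))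
    exact ⟨hy, hTy⟩
  · rintro h ⟨u, v⟩ huv
    obtain ⟨x, rfl, rfl⟩ := S.mem_graph_iff.1 huv
    obtain ⟨hBx, hTBx⟩ := h x
    exact T.mem_graph_iff.2 ⟨⟨B x, hBx⟩, rfl, hTBx⟩

theorem CommutesWith.comp {S T : E →ₗ.[R] E} {B : E → E} (hS : S.CommutesWith B)
    (hT : T.CommutesWith B) (x : T.domain) (hx : T x ∈ S.domain) :
    ∃ (hBx : B x ∈ T.domain) (hTBx : T ⟨B x, hBx⟩ ∈ S.domain),
      S ⟨T ⟨B x, hBx⟩, hTBx⟩ = B (S ⟨T x, hx⟩) := by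
  obtain ⟨hBx, hTBx⟩ := hT x
  obtain ⟨hBTx, hSBTx⟩ := hS ⟨T x, hx⟩
  exact ⟨hBx, hTBx ▸ hBTx, by simp only [hTBx, hSBTx]⟩

end CommutesWith

theorem IsClosed.commutesWith_of_core {R E : Type*} [CommRing R] [AddCommGroup E] [Module R E]
    [TopologicalSpace E] [ContinuousAdd E] [TopologicalSpace R] [ContinuousSMul R E]
    {T : E →ₗ.[R] E} (hT : T.IsClosed) {S : Submodule R E}
    (hcore : (T.domRestrict S).closure = T) {B : E → E} (hB : Continuous B)
    (h : ∀ x : T.domain, (x : E) ∈ S → ∃ hBx : B x ∈ T.domain, T ⟨B x, hBx⟩ = B (T x)) :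
    T.CommutesWith B := by
  have hcore_graph :
      (T.graph : Set (E × E)) = _root_.closure ((T.domRestrict S).graph : Set (E × E)) := by
    conv_lhs => rw [← hcore]
    rw [← (hT.isClosable.leIsClosable domRestrict_le).graph_closure_eq_closure_graph,
      Submodule.topologicalClosure_coe]
  have hS : Set.MapsTo (Prod.map B B) (T.domRestrict S).graph T.graph :=
    mapsTo_graph_iff.2 fun x => h ⟨x, x.2.2⟩ x.2.1
  have := hS.closure_left (hB.prodMap hB) hT
  rwa [← hcore_graph, mapsTo_graph_iff] at this

open RCLike

variable {𝕜 E F : Type*} [RCLike 𝕜] [NormedAddCommGroup E] [InnerProductSpace 𝕜 E]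
  [CompleteSpace E] [NormedAddCommGroup F] [InnerProductSpace 𝕜 F]

theorem CommutesWith.adjoint {T : E →ₗ.[𝕜] E} (hT : Dense (T.domain : Set E)) {B : E →L[𝕜] E}
    (h : T.CommutesWith (ContinuousLinearMap.adjoint B)) : T†.CommutesWith B := by
  intro y
  have key (x : T.domain) : ⟪B (T† y), (x : E)⟫_𝕜 = ⟪B y, T x⟫_𝕜 := by
    obtain ⟨hBx, hTBx⟩ := h x
    calc ⟪B (T† y), (x : E)⟫_𝕜 = ⟪T† y, ContinuousLinearMap.adjoint B x⟫_𝕜 :=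
          (ContinuousLinearMap.adjoint_inner_right _ _ _).symm
      _ = ⟪(y : E), T ⟨_, hBx⟩⟫_𝕜 := adjoint_isFormalAdjoint hT y ⟨_, hBx⟩
      _ = ⟪B y, T x⟫_𝕜 := by rw [hTBx, ContinuousLinearMap.adjoint_inner_right]
  have hBy : B y ∈ T†.domain := mem_adjoint_domain_of_exists _ ⟨_, key⟩
  exact ⟨hBy, adjoint_apply_eq hT ⟨B y, hBy⟩ key⟩

section Resolvent

variable (T : E →ₗ.[𝕜] F)

def adjointMulSelfDomain : Submodule 𝕜 T.domain := T†.domain.comap T.toFun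

def oneAddAdjointMulSelf : T.adjointMulSelfDomain →ₗ[𝕜] E :=
  T.domain.subtype ∘ₗ T.adjointMulSelfDomain.subtype +
    T†.toFun ∘ₗ (T.toFun ∘ₗ T.adjointMulSelfDomain.subtype).codRestrict T†.domain fun x => x.2

theorem oneAddAdjointMulSelf_apply (x : T.adjointMulSelfDomain) :
    T.oneAddAdjointMulSelf x = (x : E) + T† ⟨T x, x.2⟩ := rfl

variable {T} (hT : Dense (T.domain : Set E))
include hT

theorem inner_oneAddAdjointMulSelf (x y : T.adjointMulSelfDomain) :
    ⟪T.oneAddAdjointMulSelf x, y⟫_𝕜 = ⟪(x : E), y⟫_𝕜 + ⟪T x, T y⟫_𝕜 := by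
  rw [oneAddAdjointMulSelf_apply, inner_add_left, adjoint_isFormalAdjoint hT ⟨T x, x.2⟩ y]

theorem norm_le_norm_oneAddAdjointMulSelf (x : T.adjointMulSelfDomain) :
    ‖(x : E)‖ ≤ ‖T.oneAddAdjointMulSelf x‖ ∧ ‖T x‖ ≤ ‖T.oneAddAdjointMulSelf x‖ := by
  have hre : ‖(x : E)‖ ^ 2 + ‖T x‖ ^ 2 ≤ ‖T.oneAddAdjointMulSelf x‖ * ‖(x : E)‖ := by
    rw [← inner_self_eq_norm_sq (𝕜 := 𝕜), ← inner_self_eq_norm_sq (𝕜 := 𝕜), ← _root_.map_add,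
      ← inner_oneAddAdjointMulSelf hT x x]
    exact (re_le_norm _).trans (norm_inner_le_norm _ _)
  have hx : ‖(x : E)‖ ≤ ‖T.oneAddAdjointMulSelf x‖ := by
    nlinarith [norm_nonneg (x : E), norm_nonneg (T x), norm_nonneg (T.oneAddAdjointMulSelf x)]
  exact ⟨hx, by nlinarith [norm_nonneg (x : E), norm_nonneg (T x)]⟩

theorem oneAddAdjointMulSelf_injective : Function.Injective T.oneAddAdjointMulSelf := by
  rw [← LinearMap.ker_eq_bot, LinearMap.ker_eq_bot']
  intro x hx
  have := (norm_le_norm_oneAddAdjointMulSelf hT x).1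
  rw [hx, norm_zero] at this
  exact Subtype.ext (Subtype.ext (norm_le_zero_iff.1 this))

variable [CompleteSpace F] (hc : T.IsClosed)
include hc

/-- von Neumann's argument: split `(v, 0)` along the closed graph of `T` and its orthogonal
complement; the orthogonal part, rotated, lies in the graph of `T†`. -/
theorem oneAddAdjointMulSelf_surjective : Function.Surjective T.oneAddAdjointMulSelf := by
  intro v
  let G : Submodule 𝕜 (WithLp 2 (E × F)) :=
    T.graph.comap (WithLp.linearEquiv 2 𝕜 (E × F)).toLinearMap
  have : CompleteSpace G := (hc.preimage (WithLp.prod_continuous_ofLp 2 E F)).completeSpace_coe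
  obtain ⟨g, hg, z, hz, hgz⟩ := G.exists_add_mem_mem_orthogonal (WithLp.toLp 2 (v, 0))
  obtain ⟨x, hx, hTx⟩ := T.mem_graph_iff.1 hg
  have hz_adj : ((WithLp.ofLp z).2, -(WithLp.ofLp z).1) ∈ T†.graph := by
    rw [adjoint_graph_eq_graph_adjoint hT, Submodule.mem_adjoint_iff]
    intro a b hab
    have := (Submodule.mem_orthogonal G z).1 hz (WithLp.toLp 2 (a, b)) hab
    rw [WithLp.prod_inner_apply] at this
    simp only [inner_neg_right, sub_neg_eq_add]
    simpa [add_comm] using this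
  obtain ⟨w, hw, hTw⟩ := T†.mem_graph_iff.1 hz_adj
  dsimp only at hw hTw
  have hv : v = x + (WithLp.ofLp z).1 := by
    simpa [hx] using congrArg (fun p => (WithLp.ofLp p).1) hgz
  have hTxw : T x = -(w : F) := by
    have := congrArg (fun p => (WithLp.ofLp p).2) hgz
    simp only [WithLp.ofLp_add, Prod.snd_add] at this
    rw [hTx, hw]
    exact eq_neg_of_add_eq_zero_left this.symm
  have hTx_mem : T x ∈ T†.domain := hTxw ▸ neg_mem w.2
  refine ⟨⟨x, hTx_mem⟩, ?_⟩
  have hadj : T† ⟨T x, hTx_mem⟩ = (WithLp.ofLp z).1 := by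
    rw [show (⟨T x, hTx_mem⟩ : T†.domain) = -w from Subtype.ext hTxw, LinearPMap.map_neg, hTw,
      neg_neg]
  rw [oneAddAdjointMulSelf_apply, hv]
  exact congrArg _ hadj

def oneAddAdjointMulSelfEquiv : T.adjointMulSelfDomain ≃ₗ[𝕜] E :=
  .ofBijective _ ⟨oneAddAdjointMulSelf_injective hT, oneAddAdjointMulSelf_surjective hT hc⟩

theorem oneAddAdjointMulSelf_equiv_symm_apply (v : E) :
    T.oneAddAdjointMulSelf ((oneAddAdjointMulSelfEquiv hT hc).symm v) = v :=
  LinearEquiv.apply_ofBijective_symm_apply _ v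

def oneAddAdjointMulSelfInv : E →L[𝕜] E :=
  (T.domain.subtype ∘ₗ T.adjointMulSelfDomain.subtype ∘ₗ
    (oneAddAdjointMulSelfEquiv hT hc).symm.toLinearMap).mkContinuous 1 fun v => by
      simpa [oneAddAdjointMulSelf_equiv_symm_apply] using
        (norm_le_norm_oneAddAdjointMulSelf hT ((oneAddAdjointMulSelfEquiv hT hc).symm v)).1

def mulOneAddAdjointMulSelfInv : E →L[𝕜] F :=
  (T.toFun ∘ₗ T.adjointMulSelfDomain.subtype ∘ₗ
    (oneAddAdjointMulSelfEquiv hT hc).symm.toLinearMap).mkContinuous 1 fun v => by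
      simpa [oneAddAdjointMulSelf_equiv_symm_apply] using
        (norm_le_norm_oneAddAdjointMulSelf hT ((oneAddAdjointMulSelfEquiv hT hc).symm v)).2

theorem oneAddAdjointMulSelfInv_add_adjoint (v : E) :
    ∃ h : mulOneAddAdjointMulSelfInv hT hc v ∈ T†.domain,
      oneAddAdjointMulSelfInv hT hc v + T† ⟨_, h⟩ = v :=
  ⟨((oneAddAdjointMulSelfEquiv hT hc).symm v).2, oneAddAdjointMulSelf_equiv_symm_apply hT hc v⟩

theorem inner_oneAddAdjointMulSelfInv_right (u v : E) :
    ⟪u, oneAddAdjointMulSelfInv hT hc v⟫_𝕜 =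
      ⟪oneAddAdjointMulSelfInv hT hc u, oneAddAdjointMulSelfInv hT hc v⟫_𝕜 +
        ⟪mulOneAddAdjointMulSelfInv hT hc u, mulOneAddAdjointMulSelfInv hT hc v⟫_𝕜 := by
  conv_lhs => rw [← oneAddAdjointMulSelf_equiv_symm_apply hT hc u]
  exact inner_oneAddAdjointMulSelf hT _ _

theorem inner_oneAddAdjointMulSelfInv_left (u v : E) :
    ⟪oneAddAdjointMulSelfInv hT hc u, v⟫_𝕜 =
      ⟪oneAddAdjointMulSelfInv hT hc u, oneAddAdjointMulSelfInv hT hc v⟫_𝕜 +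
        ⟪mulOneAddAdjointMulSelfInv hT hc u, mulOneAddAdjointMulSelfInv hT hc v⟫_𝕜 := by
  rw [← inner_conj_symm, inner_oneAddAdjointMulSelfInv_right, _root_.map_add, inner_conj_symm,
    inner_conj_symm]

theorem isPositive_oneAddAdjointMulSelfInv : (oneAddAdjointMulSelfInv hT hc).IsPositive := by
  refine ⟨fun u v => ?_, fun u => ?_⟩
  · exact (inner_oneAddAdjointMulSelfInv_left hT hc u v).trans
      (inner_oneAddAdjointMulSelfInv_right hT hc u v).symm
  · rw [ContinuousLinearMap.reApplyInnerSelf_apply, inner_oneAddAdjointMulSelfInv_left,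
      _root_.map_add, inner_self_eq_norm_sq, inner_self_eq_norm_sq]
    positivity

theorem inner_mulOneAddAdjointMulSelfInv (u v : E) :
    ⟪mulOneAddAdjointMulSelfInv hT hc u, mulOneAddAdjointMulSelfInv hT hc v⟫_𝕜 =
      ⟪(oneAddAdjointMulSelfInv hT hc -
        oneAddAdjointMulSelfInv hT hc * oneAddAdjointMulSelfInv hT hc) u, v⟫_𝕜 := by
  change _ = ⟪oneAddAdjointMulSelfInv hT hc u -
    oneAddAdjointMulSelfInv hT hc (oneAddAdjointMulSelfInv hT hc u), v⟫_𝕜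
  rw [inner_sub_left, (isPositive_oneAddAdjointMulSelfInv hT hc).inner_left_eq_inner_right
      (oneAddAdjointMulSelfInv hT hc u) v,
    inner_oneAddAdjointMulSelfInv_left hT hc u v, add_sub_cancel_left]

end Resolvent

variable {T : E →ₗ.[𝕜] E} (hT : Dense (T.domain : Set E)) (hc : T.IsClosed) {B : E →L[𝕜] E}
include hT hc

theorem CommutesWith.commute_oneAddAdjointMulSelfInv (h : T.CommutesWith B)
    (h' : T†.CommutesWith B) : Commute B (oneAddAdjointMulSelfInv hT hc) := by
  ext v
  set x := (oneAddAdjointMulSelfEquiv hT hc).symm v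
  obtain ⟨h₁, h₂, hBx⟩ := h'.comp h (x : T.domain) x.2
  suffices (oneAddAdjointMulSelfEquiv hT hc).symm (B v) = ⟨⟨B x, h₁⟩, h₂⟩ from
    congrArg (fun y : T.adjointMulSelfDomain => ((y : T.domain) : E)) this.symm
  rw [LinearEquiv.symm_apply_eq]
  change B v = B x + T† ⟨T ⟨B x, h₁⟩, h₂⟩
  rw [hBx, ← _root_.map_add]
  exact congrArg B (oneAddAdjointMulSelf_equiv_symm_apply hT hc v).symm

theorem CommutesWith.commute_mulOneAddAdjointMulSelfInv (h : T.CommutesWith B)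
    (hR : Commute B (oneAddAdjointMulSelfInv hT hc)) :
    Commute B (mulOneAddAdjointMulSelfInv hT hc) := by
  ext v
  obtain ⟨hBx, hTBx⟩ := h ((oneAddAdjointMulSelfEquiv hT hc).symm v)
  exact hTBx.symm.trans (congrArg T (Subtype.ext (DFunLike.congr_fun hR v)))

end LinearPMap

namespace IsModulusOf

open LinearPMap

variable {A T : H →ₗ.[ℂ] H} (hAT : IsModulusOf A T) (hA : Dense (A.domain : Set H))
  (hc : A.IsClosed)
include hAT

theorem mem_domain {x : H} (hx : x ∈ A.domain) : x ∈ T.domain := hAT.1 ▸ hx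

theorem norm_apply (x : A.domain) : ‖T ⟨x, hAT.mem_domain x.2⟩‖ = ‖A x‖ := by
  rw [norm_eq_sqrt_re_inner (𝕜 := ℂ), norm_eq_sqrt_re_inner (𝕜 := ℂ), hAT.2.2.2 x x]

def mulOneAddAdjointMulSelfInv : H →L[ℂ] H :=
  (T.toFun ∘ₗ (A.oneAddAdjointMulSelfInv hA hc : H →ₗ[ℂ] H).codRestrict T.domain
    fun v => hAT.mem_domain ((A.oneAddAdjointMulSelfEquiv hA hc).symm v : A.domain).2).mkContinuous
    1 fun v => (hAT.norm_apply _).trans_le <|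
      (A.mulOneAddAdjointMulSelfInv hA hc).le_of_opNorm_le
        (LinearMap.mkContinuous_norm_le _ zero_le_one _) v

include hA

theorem isFormalAdjoint : T.IsFormalAdjoint T := by
  simpa only [hAT.2.1] using adjoint_isFormalAdjoint (T := T) (hAT.1 ▸ hA)

theorem apply_apply_eq_adjoint_apply (x : A.domain) (hx : A x ∈ A†.domain) :
    ∃ h : T ⟨x, hAT.mem_domain x.2⟩ ∈ T.domain, T ⟨_, h⟩ = A† ⟨A x, hx⟩ := by
  have key (y : T.domain) : ⟪A† ⟨A x, hx⟩, (y : H)⟫_ℂ = ⟪T ⟨x, hAT.mem_domain x.2⟩, T y⟫_ℂ := by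
    rw [adjoint_isFormalAdjoint hA ⟨A x, hx⟩ ⟨y, hAT.1 ▸ y.2⟩, hAT.2.2.2]
  have hadj : ∃ h : T ⟨x, hAT.mem_domain x.2⟩ ∈ T†.domain, T† ⟨_, h⟩ = A† ⟨A x, hx⟩ :=
    have h := mem_adjoint_domain_of_exists _ ⟨_, key⟩
    ⟨h, adjoint_apply_eq (hAT.1 ▸ hA) ⟨_, h⟩ key⟩
  rwa [hAT.2.1] at hadj

include hc

theorem add_apply_mulOneAddAdjointMulSelfInv (u : H) :
    ∃ h : hAT.mulOneAddAdjointMulSelfInv hA hc u ∈ T.domain,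
      A.oneAddAdjointMulSelfInv hA hc u + T ⟨_, h⟩ = u := by
  obtain ⟨hx, hu⟩ := A.oneAddAdjointMulSelfInv_add_adjoint hA hc u
  obtain ⟨h, hTT⟩ := hAT.apply_apply_eq_adjoint_apply hA _ hx
  exact ⟨h, hTT ▸ hu⟩

theorem isPositive_mulOneAddAdjointMulSelfInv :
    (hAT.mulOneAddAdjointMulSelfInv hA hc).IsPositive := by
  set Z := hAT.mulOneAddAdjointMulSelfInv hA hc
  set R := A.oneAddAdjointMulSelfInv hA hc
  have hR (u : H) : R u ∈ T.domain :=
    hAT.mem_domain ((A.oneAddAdjointMulSelfEquiv hA hc).symm u : A.domain).2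
  have hT := hAT.isFormalAdjoint hA
  refine ⟨fun u v => ?_, fun u => ?_⟩
  · obtain ⟨hu, hu'⟩ := hAT.add_apply_mulOneAddAdjointMulSelfInv hA hc u
    obtain ⟨hv, hv'⟩ := hAT.add_apply_mulOneAddAdjointMulSelfInv hA hc v
    calc ⟪Z u, v⟫_ℂ = ⟪Z u, R v + T ⟨Z v, hv⟩⟫_ℂ := by rw [hv']
      _ = ⟪R u + T ⟨Z u, hu⟩, Z v⟫_ℂ := by
        rw [inner_add_right, inner_add_left, hT ⟨Z u, hu⟩ ⟨Z v, hv⟩]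
        exact congrArg (· + _) (hT ⟨R u, hR u⟩ ⟨R v, hR v⟩)
      _ = ⟪u, Z v⟫_ℂ := by rw [hu']
  · obtain ⟨hu, hu'⟩ := hAT.add_apply_mulOneAddAdjointMulSelfInv hA hc u
    rw [ContinuousLinearMap.reApplyInnerSelf_apply]
    nth_rw 2 [← hu']
    rw [inner_add_right, _root_.map_add, inner_re_symm]
    exact add_nonneg (hAT.2.2.1 ⟨R u, hR u⟩).1 (hAT.2.2.1 ⟨Z u, hu⟩).1

theorem mulOneAddAdjointMulSelfInv_mul_self :
    hAT.mulOneAddAdjointMulSelfInv hA hc * hAT.mulOneAddAdjointMulSelfInv hA hc =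
      A.oneAddAdjointMulSelfInv hA hc -
        A.oneAddAdjointMulSelfInv hA hc * A.oneAddAdjointMulSelfInv hA hc := by
  ext1 u
  refine ext_inner_right ℂ fun v => ?_
  rw [← inner_mulOneAddAdjointMulSelfInv hA hc]
  exact ((hAT.isPositive_mulOneAddAdjointMulSelfInv hA hc).inner_left_eq_inner_right _ v).trans
    (hAT.2.2.2 _ _ _ _).symm

theorem inner_apply_eq_zero {k : H} (hk : hAT.mulOneAddAdjointMulSelfInv hA hc k = 0)
    (x : T.domain) : ⟪k, T x⟫_ℂ = 0 := by
  obtain ⟨h, hk'⟩ := hAT.add_apply_mulOneAddAdjointMulSelfInv hA hc k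
  have hTZk : T ⟨_, h⟩ = 0 :=
    (congrArg T (Subtype.ext hk : (⟨_, h⟩ : T.domain) = 0)).trans T.map_zero
  rw [hTZk, add_zero] at hk'
  have hRk : A.oneAddAdjointMulSelfInv hA hc k ∈ T.domain :=
    hAT.mem_domain ((A.oneAddAdjointMulSelfEquiv hA hc).symm k : A.domain).2
  rw [← hk', ← hAT.isFormalAdjoint hA ⟨_, hRk⟩ x]
  exact (congrArg (⟪·, (x : H)⟫_ℂ) hk).trans (inner_zero_left _)

end IsModulusOf

theorem IsPhaseOf.commute {A : H →ₗ.[ℂ] H} (hA : Dense (A.domain : Set H)) (hc : A.IsClosed)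
    {V : H →L[ℂ] H} (hV : IsPhaseOf A V) {B : H →L[ℂ] H} (h : A.CommutesWith B)
    (h' : A†.CommutesWith B) : Commute B V := by
  obtain ⟨T, hAT, hVT, hV0⟩ := hV
  set Z := hAT.mulOneAddAdjointMulSelfInv hA hc
  have hZ := hAT.isPositive_mulOneAddAdjointMulSelfInv hA hc
  have hR := h.commute_oneAddAdjointMulSelfInv hA hc h'
  have hC := h.commute_mulOneAddAdjointMulSelfInv hA hc hR
  have hBZ : Commute B Z := by
    refine (Commute.of_mul_self_left ((ContinuousLinearMap.nonneg_iff_isPositive _).2 hZ) ?_).symm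
    rw [hAT.mulOneAddAdjointMulSelfInv_mul_self]
    exact (hR.sub_right (hR.mul_right hR)).symm
  have hVZ (u : H) : V (Z u) = A.mulOneAddAdjointMulSelfInv hA hc u := hVT _ _
  have hker {k : H} (hk : Z k = 0) : V k = 0 := hV0 k (hAT.inner_apply_eq_zero hA hc hk)
  refine hZ.isSelfAdjoint.eq_of_comp_eq_of_eqOn_ker (f := B ∘L V) (g := V ∘L B) ?_ fun k hk => ?_
  · ext u
    change B (V (Z u)) = V (B (Z u))
    rw [hVZ, show B (Z u) = Z (B u) from DFunLike.congr_fun hBZ.eq u, hVZ]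
    exact DFunLike.congr_fun hC.eq u
  · change B (V k) = V (B k)
    rw [hker hk, map_zero, hker]
    exact (DFunLike.congr_fun hBZ.eq.symm k).trans ((congrArg B hk).trans (map_zero B))

theorem bounded_commutes_with_phase_general
    (A : H →ₗ.[ℂ] H) (hdense : Dense (A.domain : Set H)) (hclosed : A.IsClosed)
    (B : H →L[ℂ] H) (hB0 : (B : H →L[ℂ] H).IsPositive)
    (S : Submodule ℂ H)
    (hcore : (A.domRestrict S).closure = A)
    (hcomm : ∀ x : A.domain, (x : H) ∈ S →
      ∃ hBx : B x ∈ A.domain, A ⟨B x, hBx⟩ = B (A x)) :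
    (∀ x : A.domain, ∃ hBx : B x ∈ A.domain, A ⟨B x, hBx⟩ = B (A x)) ∧
    (∀ (x : A.domain) (hx : A x ∈ A.adjoint.domain),
      ∃ (h₁ : B (x : H) ∈ A.domain) (h₂ : A ⟨B x, h₁⟩ ∈ A.adjoint.domain),
        A.adjoint ⟨A ⟨B x, h₁⟩, h₂⟩ = B (A.adjoint ⟨A x, hx⟩)) ∧
    (∀ V : H →L[ℂ] H, IsPhaseOf A V → B ∘L V = V ∘L B) := by
  have hA : A.CommutesWith B := hclosed.commutesWith_of_core hcore B.continuous hcomm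
  have hA' : A†.CommutesWith B :=
    LinearPMap.CommutesWith.adjoint hdense (by rwa [hB0.isSelfAdjoint.adjoint_eq])
  exact ⟨hA, hA'.comp hA, fun V hV => (hV.commute hdense hclosed hA hA').eq⟩

/-- If `A` is closed and densely defined, `0 ≤ B ≤ I` is bounded, `AB = BA` on a
core `S` for `A`, and `B` maps `S` into `𝒟(A*A)`, then `B` preserves `𝒟(A)` with
`AB = BA` there, preserves `𝒟(A*A)` with `A*AB = BA*A` there, and `B` commutes with
the phase of `A`. -/
theorem bounded_commutes_with_phase
    (A : H →ₗ.[ℂ] H) (hdense : Dense (A.domain : Set H)) (hclosed : A.IsClosed)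
    (B : H →L[ℂ] H) (hB0 : (B : H →L[ℂ] H).IsPositive)
    (hB1 : ((1 : H →L[ℂ] H) - B).IsPositive)
    (S : Submodule ℂ H) (hS : S ≤ A.domain)
    (hcore : (A.domRestrict S).closure = A)
    (hcomm : ∀ x : A.domain, (x : H) ∈ S →
      ∃ hBx : B x ∈ A.domain, A ⟨B x, hBx⟩ = B (A x))
    (hBS : ∀ x : A.domain, (x : H) ∈ S →
      ∃ hBx : B (x : H) ∈ A.domain, A ⟨B x, hBx⟩ ∈ A.adjoint.domain) :
    (∀ x : A.domain, ∃ hBx : B x ∈ A.domain, A ⟨B x, hBx⟩ = B (A x)) ∧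
    (∀ (x : A.domain) (hx : A x ∈ A.adjoint.domain),
      ∃ (h₁ : B (x : H) ∈ A.domain) (h₂ : A ⟨B x, h₁⟩ ∈ A.adjoint.domain),
        A.adjoint ⟨A ⟨B x, h₁⟩, h₂⟩ = B (A.adjoint ⟨A x, hx⟩)) ∧
    (∀ V : H →L[ℂ] H, IsPhaseOf A V → B ∘L V = V ∘L B) :=
  bounded_commutes_with_phase_general A hdense hclosed B hB0 S hcore hcomm

end
end

section
/- Let M be a square matrix with non-negative real entries and let M' be a proper principal submatrix obtained by deleting at least one row and the corresponding column meeting a strictly positive entry of an irreducible block. If M is irreducible, then the Perron–Frobenius eigenvalue of M' is strictly less than that of M. -/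
/-!
Maximising `r` over the pairs `(r, x)` with `x` in the standard simplex and `r x ≤ Mᵀ x`
(Collatz–Wielandt) produces a left eigenvector `x > 0` of `M` for an eigenvalue `r > 0`. If `v` is
an eigenvector of the principal submatrix for `μ`, then extending `|v|` by zero gives `w ≥ 0` with
`|μ| w ≤ M w`. Pairing with `x` gives `|μ| ≤ r`, and equality would force `M w = |μ| w`; but a
non-negative eigenvector of an irreducible matrix has no zero entry, while `w` vanishes at every
deleted index.
-/

open Matrix Finset Filter Topology
open scoped NNReal ENNReal

/-- A non-negative square matrix is irreducible if its directed graph (with an edge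
`i → j` whenever `M i j > 0`) is strongly connected, i.e. for all `i, j` some power
`M^m` with `m ≥ 1` has a strictly positive `(i,j)` entry. -/
def Matrix.PFIrreducible {n : ℕ} (M : Matrix (Fin n) (Fin n) ℝ) : Prop :=
  ∀ i j : Fin n, ∃ m : ℕ, 0 < (M ^ (m + 1)) i j

namespace Matrix

variable {ι κ : Type*} [Fintype ι]

theorem spectrum_transpose {R : Type*} [CommRing R] [DecidableEq ι] (A : Matrix ι ι R) :
    spectrum R Aᵀ = spectrum R A := by
  ext μ
  rw [mem_spectrum_iff_not_isUnit_eval_charpoly, mem_spectrum_iff_not_isUnit_eval_charpoly,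
    charpoly_transpose]

theorem mem_spectrum_iff_exists_mulVec_eq_smul {K : Type*} [Field K] [DecidableEq ι]
    {A : Matrix ι ι K} {μ : K} : μ ∈ spectrum K A ↔ ∃ v ≠ 0, A *ᵥ v = μ • v := by
  rw [spectrum.mem_iff, isUnit_iff_isUnit_det, isUnit_iff_ne_zero, not_not,
    ← exists_mulVec_eq_zero_iff]
  simp only [sub_mulVec, Algebra.algebraMap_eq_smul_one, smul_mulVec, one_mulVec, sub_eq_zero,
    eq_comm]

theorem spectralRadius_lt_of_forall_nnnorm_lt {𝕜 : Type*} [NormedField 𝕜] [DecidableEq ι]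
    (A : Matrix ι ι 𝕜) {c : ℝ≥0} (hc : 0 < c) (h : ∀ μ ∈ spectrum 𝕜 A, ‖μ‖₊ < c) :
    spectralRadius 𝕜 A < c := by
  rw [spectralRadius, ← (finite_spectrum A).coe_toFinset]
  simp_rw [Finset.mem_coe]
  rw [← Finset.sup_eq_iSup, Finset.sup_lt_iff (by simpa using hc)]
  simpa using h

theorem mulVec_extend_zero_apply {R : Type*} [NonUnitalNonAssocSemiring R] [Fintype κ]
    (A : Matrix ι ι R) (e : κ ↪ ι) (u : κ → R) (i : κ) :
    (A *ᵥ Function.extend e u 0) (e i) = (A.submatrix e e *ᵥ u) i :=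
  (Fintype.sum_of_injective e e.injective _ _
    (fun j hj => by simp [Function.extend_apply' _ _ _ (by simpa using hj)])
    (fun i' => by simp [e.injective.extend_apply])).symm

theorem exists_pos_smul_le [Finite κ] {z : κ → ℝ} (hz : ∀ i, 0 < z i) (y : κ → ℝ) :
    ∃ ε : ℝ, 0 < ε ∧ ε • y ≤ z := by
  have hsmall : ∀ᶠ ε in 𝓝[>] (0 : ℝ), 0 < ε ∧ ∀ i, ε * y i < z i :=
    eventually_mem_nhdsWithin.and <| eventually_all.2 fun i =>
      (((continuous_id.mul continuous_const).tendsto' 0 0 (by simp)).mono_left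
        nhdsWithin_le_nhds).eventually_lt_const (hz i)
  obtain ⟨ε, hε, hεy⟩ := hsmall.exists
  exact ⟨ε, hε, fun i => (hεy i).le⟩

section Nonneg

variable {M : Matrix ι ι ℝ}

theorem mulVec_nonneg (hM : ∀ i j, 0 ≤ M i j) {w : ι → ℝ} (hw : 0 ≤ w) : 0 ≤ M *ᵥ w :=
  fun i => dotProduct_nonneg_of_nonneg (fun j => hM i j) hw

theorem abs_mulVec_le (hM : ∀ i j, 0 ≤ M i j) (v : ι → ℝ) : |M *ᵥ v| ≤ M *ᵥ |v| := fun i =>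
  (abs_sum_le_sum_abs _ _).trans_eq <| sum_congr rfl fun j _ => by
    rw [abs_mul, abs_of_nonneg (hM i j), Pi.abs_apply]

theorem mul_le_mulVec_apply (hM : ∀ i j, 0 ≤ M i j) {w : ι → ℝ} (hw : 0 ≤ w) (i j : ι) :
    M i j * w j ≤ (M *ᵥ w) i :=
  single_le_sum (f := fun j => M i j * w j) (fun j _ => mul_nonneg (hM i j) (hw j)) (mem_univ j)

theorem mulVec_pos_of_forall_pos {B : Matrix ι ι ℝ} (hB : ∀ i j, 0 < B i j) {w : ι → ℝ}
    (hw : 0 ≤ w) (hw0 : w ≠ 0) (i : ι) : 0 < (B *ᵥ w) i := by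
  obtain ⟨q, hq⟩ := (Pi.lt_def.1 (hw.lt_of_ne' hw0)).2
  exact (mul_pos (hB i q) hq).trans_le (mul_le_mulVec_apply (fun i j => (hB i j).le) hw i q)

-- The Perron root will be the largest `r` occurring here.
def collatzWielandtSet (M : Matrix ι ι ℝ) : Set (ℝ × (ι → ℝ)) :=
  {p | 0 ≤ p.1 ∧ p.2 ∈ stdSimplex ℝ ι ∧ p.1 • p.2 ≤ M *ᵥ p.2}

theorem le_sum_of_mem_collatzWielandtSet (hM : ∀ i j, 0 ≤ M i j) {p : ℝ × (ι → ℝ)}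
    (hp : p ∈ collatzWielandtSet M) : p.1 ≤ ∑ i, ∑ j, M i j := by
  obtain ⟨-, ⟨hx, hx1⟩, hpM⟩ := hp
  have hxle : ∀ j, p.2 j ≤ 1 := fun j => hx1 ▸ single_le_sum (fun i _ => hx i) (mem_univ j)
  calc p.1 = ∑ i, p.1 * p.2 i := by rw [← mul_sum, hx1, mul_one]
    _ ≤ ∑ i, ∑ j, M i j * p.2 j := sum_le_sum fun i _ => hpM i
    _ ≤ ∑ i, ∑ j, M i j := sum_le_sum fun i _ => sum_le_sum fun j _ =>
        mul_le_of_le_one_right (hM i j) (hxle j)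

theorem isCompact_collatzWielandtSet (hM : ∀ i j, 0 ≤ M i j) :
    IsCompact (collatzWielandtSet M) := by
  have hclosed : IsClosed (collatzWielandtSet M) :=
    (isClosed_le continuous_const continuous_fst).inter <|
      ((isClosed_stdSimplex ℝ ι).preimage continuous_snd).inter <|
        isClosed_le (by fun_prop) (continuous_const.matrix_mulVec continuous_snd)
  exact (isCompact_Icc.prod (isCompact_stdSimplex ℝ ι)).of_isClosed_subset hclosed
    fun p hp => ⟨⟨hp.1, le_sum_of_mem_collatzWielandtSet hM hp⟩, hp.2.1⟩

theorem inv_sum_smul_mem_collatzWielandtSet {r : ℝ} {y : ι → ℝ} (hr : 0 ≤ r) (hy : 0 ≤ y)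
    (hy0 : y ≠ 0) (h : r • y ≤ M *ᵥ y) : (r, (∑ i, y i)⁻¹ • y) ∈ collatzWielandtSet M := by
  have hsum : 0 < ∑ i, y i := by
    obtain ⟨q, hq⟩ := (Pi.lt_def.1 (hy.lt_of_ne' hy0)).2
    exact hq.trans_le (single_le_sum (fun i _ => hy i) (mem_univ q))
  refine ⟨hr, ⟨fun i => mul_nonneg (inv_nonneg.2 hsum.le) (hy i), ?_⟩, ?_⟩
  · simp [← mul_sum, hsum.ne']
  · rw [mulVec_smul, smul_comm]
    exact smul_le_smul_of_nonneg_left h (inv_nonneg.2 hsum.le)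

variable [DecidableEq ι]

theorem pow_mulVec_eq_smul {w : ι → ℝ} {s : ℝ} (h : M *ᵥ w = s • w) (t : ℕ) :
    (M ^ t) *ᵥ w = s ^ t • w := by
  induction t with
  | zero => simp
  | succ t ih => rw [pow_succ', ← mulVec_mulVec, ih, mulVec_smul, h, smul_smul, pow_succ]

theorem exists_pow_mul_pos_of_mulVec_eq_smul (hM : ∀ i j, 0 ≤ M i j)
    (hirr : ∀ i j, ∃ m : ℕ, 0 < (M ^ (m + 1)) i j) {w : ι → ℝ} {s : ℝ} {q : ι}
    (hw : 0 ≤ w) (hq : 0 < w q) (h : M *ᵥ w = s • w) (p : ι) :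
    ∃ m : ℕ, 0 < s ^ (m + 1) * w p := by
  obtain ⟨m, hm⟩ := hirr p q
  refine ⟨m, (mul_pos hm hq).trans_le ?_⟩
  simpa [pow_mulVec_eq_smul h] using mul_le_mulVec_apply (pow_apply_nonneg hM _) hw p q

theorem pos_of_mulVec_eq_smul (hM : ∀ i j, 0 ≤ M i j)
    (hirr : ∀ i j, ∃ m : ℕ, 0 < (M ^ (m + 1)) i j) {w : ι → ℝ} {s : ℝ}
    (hw : 0 ≤ w) (hw0 : w ≠ 0) (h : M *ᵥ w = s • w) (p : ι) : 0 < w p := by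
  obtain ⟨q, hq⟩ := (Pi.lt_def.1 (hw.lt_of_ne' hw0)).2
  obtain ⟨m, hm⟩ := exists_pow_mul_pos_of_mulVec_eq_smul hM hirr hw hq h p
  exact (hw p).lt_of_ne' fun hp => by simp [hp] at hm

theorem exists_sum_pow_apply_pos (hM : ∀ i j, 0 ≤ M i j)
    (hirr : ∀ i j, ∃ m : ℕ, 0 < (M ^ (m + 1)) i j) :
    ∃ L : ℕ, ∀ i j, 0 < (∑ t ∈ range L, M ^ t) i j := by
  choose m hm using hirr
  refine ⟨univ.sup (fun p : ι × ι => m p.1 p.2 + 1) + 1, fun i j => ?_⟩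
  have hmem : m i j + 1 ∈ range (univ.sup (fun p : ι × ι => m p.1 p.2 + 1) + 1) :=
    mem_range.2 <| Nat.lt_succ_of_le <|
      le_sup (f := fun p : ι × ι => m p.1 p.2 + 1) (mem_univ (i, j))
  rw [sum_apply]
  exact (hm i j).trans_le (single_le_sum (fun t _ => pow_apply_nonneg hM t i j) hmem)

theorem mulVec_eq_smul_of_isMaxOn_collatzWielandtSet (hM : ∀ i j, 0 ≤ M i j)
    (hirr : ∀ i j, ∃ m : ℕ, 0 < (M ^ (m + 1)) i j) {r : ℝ} {x : ι → ℝ}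
    (hp : (r, x) ∈ collatzWielandtSet M) (hmax : IsMaxOn Prod.fst (collatzWielandtSet M) (r, x)) :
    M *ᵥ x = r • x := by
  obtain ⟨L, hB⟩ := exists_sum_pow_apply_pos hM hirr
  set B := ∑ t ∈ range L, M ^ t
  have hBM : B * M = M * B := (Commute.sum_left _ _ _ fun t _ => Commute.pow_left rfl t).eq
  obtain ⟨hr, ⟨hx, hx1⟩, hrx⟩ := hp
  have hx0 : x ≠ 0 := fun h => by simp [h] at hx1
  by_contra hne
  -- `B` is a positive matrix commuting with `M`, so it turns the slack `M x - r x ≥ 0`, `≠ 0`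
  -- into a strictly positive one, which leaves room to increase `r`.
  set y := B *ᵥ x
  have hy : ∀ i, 0 < y i := mulVec_pos_of_forall_pos hB hx hx0
  have hz : ∀ i, 0 < (B *ᵥ (M *ᵥ x - r • x)) i :=
    mulVec_pos_of_forall_pos hB (sub_nonneg.2 hrx) (sub_ne_zero.2 hne)
  have hMy : M *ᵥ y = r • y + B *ᵥ (M *ᵥ x - r • x) := by
    rw [mulVec_sub, mulVec_smul, mulVec_mulVec, mulVec_mulVec, hBM, add_sub_cancel]
  obtain ⟨ε, hε, hεy⟩ := exists_pos_smul_le hz y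
  have hry : (r + ε) • y ≤ M *ᵥ y := by
    rw [hMy, add_smul]
    gcongr
  obtain ⟨q, -⟩ := Function.ne_iff.1 hx0
  have : r + ε ≤ r := hmax (inv_sum_smul_mem_collatzWielandtSet (by positivity)
    (fun i => (hy i).le) (fun h => (hy q).ne' (congrFun h q)) hry)
  linarith

theorem exists_pos_eigenvector_of_irreducible [Nonempty ι] (hM : ∀ i j, 0 ≤ M i j)
    (hirr : ∀ i j, ∃ m : ℕ, 0 < (M ^ (m + 1)) i j) :
    ∃ r : ℝ, 0 < r ∧ ∃ x : ι → ℝ, (∀ i, 0 < x i) ∧ M *ᵥ x = r • x := by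
  have hne : (collatzWielandtSet M).Nonempty :=
    ⟨_, inv_sum_smul_mem_collatzWielandtSet le_rfl zero_le_one one_ne_zero
      (by simpa using mulVec_nonneg hM zero_le_one)⟩
  obtain ⟨⟨r, x⟩, hp, hmax⟩ :=
    (isCompact_collatzWielandtSet hM).exists_isMaxOn hne continuous_fst.continuousOn
  have heig := mulVec_eq_smul_of_isMaxOn_collatzWielandtSet hM hirr hp hmax
  obtain ⟨hr, ⟨hx, hx1⟩, -⟩ : 0 ≤ r ∧ x ∈ stdSimplex ℝ ι ∧ r • x ≤ M *ᵥ x := hp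
  have hx0 : x ≠ 0 := fun h => by simp [h] at hx1
  have hxpos := pos_of_mulVec_eq_smul hM hirr hx hx0 heig
  have i₀ : ι := Classical.arbitrary ι
  obtain ⟨m, hm⟩ := exists_pow_mul_pos_of_mulVec_eq_smul hM hirr hx (hxpos i₀) heig i₀
  exact ⟨r, hr.lt_of_ne' fun h => by simp [h] at hm, x, hxpos, heig⟩

theorem lt_of_smul_le_mulVec_of_apply_eq_zero (hM : ∀ i j, 0 ≤ M i j)
    (hirr : ∀ i j, ∃ m : ℕ, 0 < (M ^ (m + 1)) i j) {r s : ℝ} {x w : ι → ℝ} {p : ι}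
    (hx : ∀ i, 0 < x i) (hxM : x ᵥ* M = r • x) (hw : 0 ≤ w) (hw0 : w ≠ 0) (hwp : w p = 0)
    (h : s • w ≤ M *ᵥ w) : s < r := by
  by_contra! hrs
  have hd : 0 ≤ M *ᵥ w - s • w := sub_nonneg.2 h
  have hxd : x ⬝ᵥ (M *ᵥ w - s • w) ≤ 0 := by
    calc x ⬝ᵥ (M *ᵥ w - s • w) = (r - s) * (x ⬝ᵥ w) := by
          rw [dotProduct_sub, dotProduct_mulVec, hxM, smul_dotProduct, dotProduct_smul,
            smul_eq_mul, smul_eq_mul, sub_mul]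
      _ ≤ 0 := mul_nonpos_of_nonpos_of_nonneg (sub_nonpos.2 hrs)
          (dotProduct_nonneg_of_nonneg (fun i => (hx i).le) hw)
  have hd0 : M *ᵥ w - s • w = 0 := by
    have := (sum_eq_zero_iff_of_nonneg fun i _ => mul_nonneg (hx i).le (hd i)).1
      (hxd.antisymm (dotProduct_nonneg_of_nonneg (fun i => (hx i).le) hd))
    exact funext fun i => (mul_eq_zero.1 (this i (mem_univ i))).resolve_left (hx i).ne'
  exact (pos_of_mulVec_eq_smul hM hirr hw hw0 (sub_eq_zero.1 hd0) p).ne' hwp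

theorem abs_lt_of_mem_spectrum_submatrix [DecidableEq κ] [Fintype κ] (hM : ∀ i j, 0 ≤ M i j)
    (hirr : ∀ i j, ∃ m : ℕ, 0 < (M ^ (m + 1)) i j) {r : ℝ} {x : ι → ℝ}
    (hx : ∀ i, 0 < x i) (hxM : x ᵥ* M = r • x) {e : κ ↪ ι} {p : ι} (hp : p ∉ Set.range e)
    {μ : ℝ} (hμ : μ ∈ spectrum ℝ (M.submatrix e e)) : |μ| < r := by
  obtain ⟨v, hv0, hv⟩ := mem_spectrum_iff_exists_mulVec_eq_smul.1 hμ
  set w := Function.extend e |v| 0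
  have hwe : ∀ i, w (e i) = |v i| := fun i => e.injective.extend_apply _ _ i
  have hw_out : ∀ j ∉ Set.range e, w j = 0 := fun j hj => by
    simp [w, Function.extend_apply' _ _ _ (by simpa using hj)]
  have hw : 0 ≤ w := fun j => by
    by_cases hj : j ∈ Set.range e
    · obtain ⟨i, rfl⟩ := hj
      simp [hwe]
    · simp [hw_out j hj]
  have hw0 : w ≠ 0 := fun h => hv0 <| funext fun i => by simpa [hwe] using congrFun h (e i)
  refine lt_of_smul_le_mulVec_of_apply_eq_zero hM hirr hx hxM hw hw0 (hw_out p hp) fun j => ?_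
  by_cases hj : j ∈ Set.range e
  · obtain ⟨i, rfl⟩ := hj
    calc (|μ| • w) (e i) = |(M.submatrix e e *ᵥ v) i| := by simp [hwe, hv, abs_mul]
      _ ≤ (M.submatrix e e *ᵥ |v|) i := abs_mulVec_le (fun _ _ => hM _ _) v i
      _ = (M *ᵥ w) (e i) := (mulVec_extend_zero_apply M e _ i).symm
  · simpa [hw_out j hj] using mulVec_nonneg hM hw j

end Nonneg

end Matrix

/-- Perron–Frobenius strict monotonicity: if `M` is an irreducible matrix with
non-negative entries and `M'` is a proper principal submatrix of `M` (obtained by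
deleting at least one row and the corresponding column; by irreducibility every
index meets a strictly positive entry), then the Perron–Frobenius eigenvalue
(spectral radius) of `M'` is strictly less than that of `M`. -/
theorem perronFrobenius_strict_mono_principal_submatrix
    {n k : ℕ} (M : Matrix (Fin n) (Fin n) ℝ)
    (hpos : ∀ i j, 0 ≤ M i j) (hirr : Matrix.PFIrreducible M)
    (e : Fin k ↪ Fin n) (hk : k < n) :
    spectralRadius ℝ (M.submatrix e e) < spectralRadius ℝ M := by
  have : Nonempty (Fin n) := ⟨⟨0, by omega⟩⟩
  have hirrT : ∀ i j, ∃ m : ℕ, 0 < (Mᵀ ^ (m + 1)) i j := fun i j =>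
    (hirr j i).imp fun m hm => by rwa [← transpose_pow]
  obtain ⟨r, hr, x, hx, hxM⟩ :=
    exists_pos_eigenvector_of_irreducible (fun i j => hpos j i) hirrT
  have hr_mem : r ∈ spectrum ℝ M := by
    rw [← spectrum_transpose, mem_spectrum_iff_exists_mulVec_eq_smul]
    exact ⟨x, fun h => (hx (Classical.arbitrary _)).ne' (congrFun h _), hxM⟩
  obtain ⟨p, hp⟩ : ∃ p, p ∉ Set.range e := by
    by_contra! h
    have := Fintype.card_le_of_surjective e fun p => h p
    simp only [Fintype.card_fin] at this
    omega
  calc spectralRadius ℝ (M.submatrix e e) < ‖r‖₊ :=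
        spectralRadius_lt_of_forall_nnnorm_lt _ (nnnorm_pos.2 hr.ne') fun μ hμ => by
          simpa [← NNReal.coe_lt_coe, abs_of_pos hr] using
            abs_lt_of_mem_spectrum_submatrix hpos hirr hx (by rwa [← mulVec_transpose]) hp hμ
    _ ≤ spectralRadius ℝ M :=
        le_iSup₂ (f := fun μ (_ : μ ∈ spectrum ℝ M) => (‖μ‖₊ : ℝ≥0∞)) r hr_mem
end
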